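/- arXiv:2401.16252 — 2 statements merged into one kernel-verified Lean document; each statement's English description precedes it below -/
import Mathlib

section
/- Let φ : ℕ → (0,∞) be increasing with ∑_{n≥1} φ(n)/n² < ∞, and f : ℕ → ℝ such that f(n+m) ≤ f(n) + f(m) + φ(n+m) for all n ∈ ℕ and all integers m with n/2 ≤ m ≤ 2n. Then f(n)/n converges to a limit ℓ ∈ ℝ ∪ {-∞} as n → ∞. -/
/-!
Write `T n = ∑_{k ≥ n} φ k / k²`, which decreases to `0`. Since `φ` is increasing,
`φ N / N ≤ 4 (T N - T (2N))`, so along a doubling sequence `n₀, 2n₀, 4n₀, …` the errors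
telescope and `f (2ᵏ n₀) / (2ᵏ n₀) ≤ f n₀ / n₀ + 4 T n₀`. Splitting an arbitrary `m` as
`a + b` with `a = 2ᵏ n₀` and `a / 2 ≤ b ≤ 2a`, strong induction on `m` gives
`f m ≤ (f n₀ / n₀ + 16 T n₀) m + C`. Hence `limsup f m / m ≤ f n₀ / n₀ + 16 T n₀` for every `n₀`,
and letting `n₀` run along a sequence realising the `liminf` shows `limsup ≤ liminf`.
-/

open Filter Finset Topology

noncomputable def tailSum (a : ℕ → ℝ) (n : ℕ) : ℝ := ∑' k, a (k + n)

section TailSum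

variable {a : ℕ → ℝ}

lemma tailSum_nonneg (ha : ∀ n, 0 ≤ a n) (n : ℕ) : 0 ≤ tailSum a n :=
  tsum_nonneg fun _ => ha _

lemma tendsto_tailSum_zero : Tendsto (tailSum a) atTop (𝓝 0) :=
  tendsto_sum_nat_add a

lemma tailSum_sub_tailSum_add (ha : Summable a) (n d : ℕ) :
    tailSum a n - tailSum a (n + d) = ∑ i ∈ range d, a (i + n) := by
  have h := ((summable_nat_add_iff n).2 ha).sum_add_tsum_nat_add d
  simp only [add_assoc, add_comm d n] at h
  rw [tailSum, tailSum, ← h]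
  ring

lemma tailSum_antitone (ha : Summable a) (h0 : ∀ n, 0 ≤ a n) : Antitone (tailSum a) := by
  intro m n hmn
  obtain ⟨d, rfl⟩ := Nat.exists_eq_add_of_le hmn
  have := tailSum_sub_tailSum_add ha m d
  have : 0 ≤ ∑ i ∈ range d, a (i + m) := sum_nonneg fun i _ => h0 _
  linarith

end TailSum

section AlmostSubadditive

variable {φ f : ℕ → ℝ}

lemma div_le_four_mul_tailSum_sub (h0 : ∀ n, 0 ≤ φ n) (hmono : Monotone φ)
    (hs : Summable fun n : ℕ => φ n / (n : ℝ) ^ 2) {N : ℕ} (hN : 0 < N) :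
    φ N / N ≤ 4 * (tailSum (fun n : ℕ => φ n / (n : ℝ) ^ 2) N -
      tailSum (fun n : ℕ => φ n / (n : ℝ) ^ 2) (2 * N)) := by
  rw [two_mul, tailSum_sub_tailSum_add hs]
  have hterm : ∀ i ∈ range N, φ N / (2 * N : ℝ) ^ 2 ≤ φ (i + N) / ((i + N : ℕ) : ℝ) ^ 2 := by
    intro i hi
    have hi : (i : ℝ) < N := by exact_mod_cast mem_range.1 hi
    push_cast
    exact div_le_div₀ (h0 _) (hmono (Nat.le_add_left N i)) (by positivity) (by gcongr; linarith)
  calc φ N / N = 4 * (#(range N) • (φ N / (2 * N : ℝ) ^ 2)) := by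
        rw [card_range, nsmul_eq_mul]; field_simp; ring
    _ ≤ _ := by gcongr; exact card_nsmul_le_sum _ _ _ hterm

def AlmostSubadditive (φ f : ℕ → ℝ) : Prop :=
  ∀ n m : ℕ, n ≤ 2 * m → m ≤ 2 * n → f (n + m) ≤ f n + f m + φ (n + m)

lemma exists_two_pow_mul_le_lt {n x : ℕ} (hn : 0 < n) (hx : n ≤ x) :
    ∃ k, 2 ^ k * n ≤ x ∧ x < 2 * (2 ^ k * n) := by
  refine ⟨Nat.log 2 (x / n), ?_, ?_⟩
  · have := Nat.pow_log_le_self 2 (Nat.div_pos hx hn).ne'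
    exact (Nat.le_div_iff_mul_le hn).1 this
  · have := Nat.lt_pow_succ_log_self one_lt_two (x / n)
    rw [pow_succ, Nat.div_lt_iff_lt_mul hn] at this
    linarith

lemma div_add_tailSum_double_le (h0 : ∀ n, 0 ≤ φ n) (hmono : Monotone φ)
    (hs : Summable fun n : ℕ => φ n / (n : ℝ) ^ 2) (hf : AlmostSubadditive φ f)
    {N : ℕ} (hN : 0 < N) :
    f (2 * N) / (2 * N : ℕ) + 4 * tailSum (fun n : ℕ => φ n / (n : ℝ) ^ 2) (2 * (2 * N)) ≤
      f N / N + 4 * tailSum (fun n : ℕ => φ n / (n : ℝ) ^ 2) (2 * N) := by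
  have hdouble : f (2 * N) ≤ 2 * f N + φ (2 * N) := by
    have := hf N N (by omega) (by omega)
    rwa [← two_mul, ← two_mul] at this
  have hφ := div_le_four_mul_tailSum_sub h0 hmono hs (N := 2 * N) (by omega)
  have hsplit : f (2 * N) / (2 * N : ℕ) ≤ f N / N + φ (2 * N) / (2 * N : ℕ) :=
    calc f (2 * N) / (2 * N : ℕ) ≤ (2 * f N + φ (2 * N)) / (2 * N : ℕ) := by gcongr
      _ = f N / N + φ (2 * N) / (2 * N : ℕ) := by push_cast; field_simp
  linarith

lemma div_two_pow_mul_le (h0 : ∀ n, 0 ≤ φ n) (hmono : Monotone φ)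
    (hs : Summable fun n : ℕ => φ n / (n : ℝ) ^ 2) (hf : AlmostSubadditive φ f)
    {n : ℕ} (hn : 0 < n) (k : ℕ) :
    f (2 ^ k * n) / (2 ^ k * n : ℕ) ≤ f n / n + 4 * tailSum (fun n : ℕ => φ n / (n : ℝ) ^ 2) n := by
  set T := tailSum (fun n : ℕ => φ n / (n : ℝ) ^ 2)
  have ha (n : ℕ) : 0 ≤ φ n / (n : ℝ) ^ 2 := div_nonneg (h0 n) (sq_nonneg _)
  have hchain : Antitone fun k => f (2 ^ k * n) / (2 ^ k * n : ℕ) + 4 * T (2 * (2 ^ k * n)) := by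
    refine antitone_nat_of_succ_le fun k => ?_
    rw [pow_succ', mul_assoc]
    exact div_add_tailSum_double_le h0 hmono hs hf (by positivity)
  have := hchain (Nat.zero_le k)
  simp only [pow_zero, one_mul] at this
  have := tailSum_nonneg ha (2 * (2 ^ k * n))
  have := tailSum_antitone hs ha (show n ≤ 2 * n by omega)
  linarith

lemma exists_le_mul_add (h0 : ∀ n, 0 ≤ φ n) (hmono : Monotone φ)
    (hs : Summable fun n : ℕ => φ n / (n : ℝ) ^ 2) (hf : AlmostSubadditive φ f)
    {n₀ : ℕ} (hn₀ : 0 < n₀) :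
    ∃ C, ∀ m, n₀ ≤ m →
      f m ≤ (f n₀ / n₀ + 16 * tailSum (fun n : ℕ => φ n / (n : ℝ) ^ 2) n₀) * m + C := by
  set T := tailSum (fun n : ℕ => φ n / (n : ℝ) ^ 2)
  set A := f n₀ / n₀ + 16 * T n₀
  have ha (n : ℕ) : 0 ≤ φ n / (n : ℝ) ^ 2 := div_nonneg (h0 n) (sq_nonneg _)
  refine ⟨∑ j ∈ Ico n₀ (3 * n₀), |f j - A * j|, fun m => ?_⟩
  induction m using Nat.strong_induction_on with
  | _ m ih =>
  intro hm
  rcases lt_or_ge m (3 * n₀) with hm3 | hm3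
  · have := single_le_sum (f := fun j : ℕ => |f j - A * j|) (fun j _ => abs_nonneg _)
      (mem_Ico.2 ⟨hm, hm3⟩)
    have := le_abs_self (f m - A * m)
    linarith
  -- split `m = a + b` with `a = 2ᵏ n₀ ≤ 2m/3 < 2a`, so that `a / 2 ≤ b ≤ 2a` and `n₀ ≤ b < m`
  obtain ⟨k, hk₁, hk₂⟩ := exists_two_pow_mul_le_lt hn₀ (x := 2 * m / 3) (by omega)
  set a := 2 ^ k * n₀
  obtain ⟨b, rfl⟩ : ∃ b, m = a + b := ⟨m - a, by omega⟩
  have ha₀ : 0 < a := by positivity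
  have hfa : f a ≤ (f n₀ / n₀ + 4 * T n₀) * a := by
    have := div_two_pow_mul_le h0 hmono hs hf hn₀ k
    rwa [div_le_iff₀ (by exact_mod_cast ha₀)] at this
  have hfb := ih b (by omega) (by omega)
  have hφ : φ (a + b) ≤ 12 * T n₀ * a := by
    have hdiv := div_le_four_mul_tailSum_sub h0 hmono hs (N := a + b) (by omega)
    have hT : T (a + b) - T (2 * (a + b)) ≤ T n₀ := by
      linarith [tailSum_nonneg ha (2 * (a + b)), tailSum_antitone hs ha (show n₀ ≤ a + b by omega)]
    have hab : ((a + b : ℕ) : ℝ) ≤ 3 * a := by exact_mod_cast (show a + b ≤ 3 * a by omega)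
    calc φ (a + b) ≤ 4 * (T (a + b) - T (2 * (a + b))) * (a + b : ℕ) :=
          (div_le_iff₀ (by positivity)).1 hdiv
      _ ≤ 4 * T n₀ * (3 * a) := by have := tailSum_nonneg ha n₀; gcongr
      _ = 12 * T n₀ * a := by ring
  calc f (a + b) ≤ f a + f b + φ (a + b) := hf a b (by omega) (by omega)
    _ ≤ A * ((a + b : ℕ) : ℝ) + ∑ j ∈ Ico n₀ (3 * n₀), |f j - A * j| := by
      push_cast; linarith

end AlmostSubadditive

lemma eventually_div_le_add_of_le_mul_add {g : ℕ → ℝ} {A C : ℝ} {n₀ : ℕ}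
    (h : ∀ m, n₀ ≤ m → g m ≤ A * m + C) {δ : ℝ} (hδ : 0 < δ) :
    ∀ᶠ m : ℕ in atTop, g m / m ≤ A + δ := by
  filter_upwards [eventually_ge_atTop (max n₀ 1),
    (tendsto_const_div_atTop_nhds_zero_nat C).eventually (gt_mem_nhds hδ)] with m hm hC
  have hm₀ : (0 : ℝ) < m := by exact_mod_cast (le_of_max_le_right hm)
  calc g m / m ≤ (A * m + C) / m := by gcongr; exact h m (le_of_max_le_left hm)
    _ = A + C / m := by field_simp
    _ ≤ A + δ := by linarith

lemma exists_tendsto_ereal_of_eventually_le_add {ι : Type*} {l : Filter ι} [l.NeBot]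
    {u : ι → ℝ} (h : ∀ ε > 0, ∀ᶠ n in l, ∀ᶠ m in l, u m ≤ u n + ε) :
    ∃ ℓ : EReal, ℓ ≠ ⊤ ∧ Tendsto (fun n => (u n : EReal)) l (𝓝 ℓ) := by
  set v : ι → EReal := fun n => (u n : EReal)
  have limsup_le {c : ℝ} (hc : ∀ᶠ m in l, u m ≤ c) : limsup v l ≤ c :=
    limsup_le_of_le (by isBoundedDefault) (hc.mono fun m hm => EReal.coe_le_coe_iff.2 hm)
  refine ⟨limsup v l, ?_, tendsto_of_le_liminf_of_limsup_le ?_ le_rfl⟩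
  · obtain ⟨n, hn⟩ := (h 1 one_pos).exists
    exact ne_top_of_le_ne_top (EReal.coe_ne_top _) (limsup_le hn)
  by_contra! hlt
  obtain ⟨x, hx₁, hx₂⟩ := EReal.lt_iff_exists_real_btwn.1 hlt
  obtain ⟨y, hy₁, hy₂⟩ := EReal.lt_iff_exists_real_btwn.1 hx₂
  have hxy : x < y := EReal.coe_lt_coe_iff.1 hy₁
  obtain ⟨n, hnx, hn⟩ :=
    ((frequently_lt_of_liminf_lt (by isBoundedDefault) hx₁).and_eventually (h (y - x) (by linarith))).exists
  have : limsup v l ≤ y :=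
    limsup_le (hn.mono fun m hm => by linarith [EReal.coe_lt_coe_iff.1 hnx])
  exact absurd hy₂ (not_lt.2 this)

theorem stmt_3 (φ : ℕ → ℝ) (f : ℕ → ℝ)
    (hφpos : ∀ n, 0 < φ n) (hφmono : Monotone φ)
    (hφsum : Summable (fun n : ℕ => φ n / (n : ℝ) ^ 2))
    (hsub : ∀ n m : ℕ, (n : ℝ) / 2 ≤ m → (m : ℝ) ≤ 2 * n →
      f (n + m) ≤ f n + f m + φ (n + m)) :
    ∃ ℓ : EReal, ℓ ≠ ⊤ ∧
      Filter.Tendsto (fun n : ℕ => ((f n / n : ℝ) : EReal)) Filter.atTop (nhds ℓ) := by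
  have h0 (n : ℕ) : 0 ≤ φ n := (hφpos n).le
  have hf : AlmostSubadditive φ f := by
    intro n m h₁ h₂
    have h₁' : (n : ℝ) ≤ 2 * m := by exact_mod_cast h₁
    exact hsub n m (by linarith) (by exact_mod_cast h₂)
  refine exists_tendsto_ereal_of_eventually_le_add fun ε hε => ?_
  filter_upwards [eventually_gt_atTop 0,
    (tendsto_tailSum_zero (a := fun n : ℕ => φ n / (n : ℝ) ^ 2)).eventually (gt_mem_nhds (show (0 : ℝ) < ε / 32 by positivity))]
    with n₀ hn₀ hT
  obtain ⟨C, hC⟩ := exists_le_mul_add h0 hφmono hφsum hf hn₀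
  filter_upwards [eventually_div_le_add_of_le_mul_add hC (half_pos hε)] with m hm
  linarith
end

section
/- Fix integers d ≥ 2 and k ≥ 1, and a subset S of the d^k leaves of the rooted complete d-ary tree of depth k with |S| < d^(k/2). If k is even, then in the two-player game where starting from the root, Player 1 chooses a child on odd levels and Player 2 chooses a child on even levels alternately until a leaf is reached, Player 2 has a strategy guaranteeing that the reached leaf is not in S, regardless of Player 1's moves. -/
/-- The prefix of play of length `i` in the `d`-ary tree, when Player 1 uses
strategy `σ` (moving at even stages, i.e. choosing children at odd levels) and
Player 2 uses strategy `τ` (moving at odd stages, i.e. choosing children at even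
levels). A vertex at depth `i` is a function `Fin i → Fin d`. -/
def playPrefix (d : ℕ) (σ τ : ∀ i : ℕ, (Fin i → Fin d) → Fin d) :
    (i : ℕ) → (Fin i → Fin d)
  | 0 => Fin.elim0
  | i + 1 =>
      Fin.snoc (playPrefix d σ τ i)
        (if i % 2 = 0 then σ i (playPrefix d σ τ i) else τ i (playPrefix d σ τ i))

theorem stmt_6 (d k : ℕ) (hd : 2 ≤ d) (hk : 1 ≤ k) (hkeven : Even k)
    (S : Finset (Fin k → Fin d)) (hS : S.card < d ^ (k / 2)) :
    ∃ τ : ∀ i : ℕ, (Fin i → Fin d) → Fin d,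
      ∀ σ : ∀ i : ℕ, (Fin i → Fin d) → Fin d,
        playPrefix d σ τ k ∉ S := by
  classical
  have hd0 : 0 < d := by omega
  -- number of elements of S extending a prefix
  let cnt : (i : ℕ) → (Fin i → Fin d) → ℕ :=
    fun i p => (S.filter fun s => ∀ j : Fin i, ∀ h : (j : ℕ) < k, s ⟨j, h⟩ = p j).card
  have hne : (Finset.univ : Finset (Fin d)).Nonempty := ⟨⟨0, hd0⟩, Finset.mem_univ _⟩
  -- a child's count is at most the parent's count
  have hmono : ∀ (i : ℕ) (p : Fin i → Fin d) (a : Fin d),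
      cnt (i + 1) (Fin.snoc p a) ≤ cnt i p := by
    intro i p a
    apply Finset.card_le_card
    intro s hs
    simp only [Finset.mem_filter] at hs ⊢
    refine ⟨hs.1, fun j h => ?_⟩
    have := hs.2 j.castSucc (by simpa using h)
    simpa [Fin.snoc] using this
  -- the children's counts sum to the parent's count (when i < k)
  have hsum : ∀ (i : ℕ), i < k → ∀ (p : Fin i → Fin d),
      ∑ a : Fin d, cnt (i + 1) (Fin.snoc p a) = cnt i p := by
    intro i hik p
    simp only [cnt]
    rw [Finset.card_eq_sum_card_fiberwise
      (f := fun s => s ⟨i, hik⟩) (t := Finset.univ) (fun s _ => Finset.mem_univ _)]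
    apply Finset.sum_congr rfl
    intro a _
    congr 1
    ext s
    simp only [Finset.mem_filter, Finset.filter_filter]
    constructor
    · rintro ⟨hsS, hcond⟩
      refine ⟨hsS, fun j h => ?_, ?_⟩
      · have := hcond j.castSucc (by simpa using h)
        simpa [Fin.snoc] using this
      · have := hcond (Fin.last i) hik
        simpa [Fin.snoc] using this
    · rintro ⟨hsS, hcond⟩
      refine ⟨hsS, fun j => ?_⟩
      refine Fin.lastCases ?_ (fun j' => ?_) j <;> intro h
      · simpa [Fin.snoc, Fin.last] using hcond.2
      · have := hcond.1 j' (by simpa using h)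
        simpa [Fin.snoc] using this
  -- Player 2's strategy: move to a child with minimal count
  have hmin : ∀ (i : ℕ) (p : Fin i → Fin d),
      ∃ a₀ ∈ (Finset.univ : Finset (Fin d)), ∀ a ∈ (Finset.univ : Finset (Fin d)),
        cnt (i + 1) (Fin.snoc p a₀) ≤ cnt (i + 1) (Fin.snoc p a) := by
    intro i p
    exact Finset.exists_min_image _ _ hne
  let τ : ∀ i : ℕ, (Fin i → Fin d) → Fin d := fun i p => (hmin i p).choose
  have hτ : ∀ (i : ℕ) (p : Fin i → Fin d), i < k →
      d * cnt (i + 1) (Fin.snoc p (τ i p)) ≤ cnt i p := by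
    intro i p hik
    have hspec := (hmin i p).choose_spec.2
    calc d * cnt (i + 1) (Fin.snoc p (τ i p))
        = ∑ _a : Fin d, cnt (i + 1) (Fin.snoc p (τ i p)) := by
          simp [Finset.sum_const, mul_comm]
      _ ≤ ∑ a : Fin d, cnt (i + 1) (Fin.snoc p a) :=
          Finset.sum_le_sum (fun a ha => hspec a ha)
      _ = cnt i p := hsum i hik p
  refine ⟨τ, fun σ => ?_⟩
  -- key invariant
  have key : ∀ j : ℕ, 2 * j ≤ k →
      d ^ j * cnt (2 * j) (playPrefix d σ τ (2 * j)) ≤ S.card := by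
    intro j
    induction j with
    | zero =>
      intro _
      simpa using Finset.card_filter_le S _
    | succ j ih =>
      intro hjk
      have h1 : 2 * j < k := by omega
      have h2 : 2 * j + 1 < k := by omega
      have e1 : playPrefix d σ τ (2 * j + 1) =
          Fin.snoc (playPrefix d σ τ (2 * j)) (σ (2 * j) (playPrefix d σ τ (2 * j))) := by
        simp [playPrefix, Nat.mul_mod_right]
      have e2 : playPrefix d σ τ (2 * j + 2) =
          Fin.snoc (playPrefix d σ τ (2 * j + 1))
            (τ (2 * j + 1) (playPrefix d σ τ (2 * j + 1))) := by
        have : (2 * j + 1) % 2 = 1 := by omega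
        simp [playPrefix, this]
      have step2 : d * cnt (2 * j + 2) (playPrefix d σ τ (2 * j + 2)) ≤
          cnt (2 * j + 1) (playPrefix d σ τ (2 * j + 1)) := by
        rw [e2]; exact hτ _ _ h2
      have step1 : cnt (2 * j + 1) (playPrefix d σ τ (2 * j + 1)) ≤
          cnt (2 * j) (playPrefix d σ τ (2 * j)) := by
        rw [e1]; exact hmono _ _ _
      have h2j : 2 * (j + 1) = 2 * j + 2 := by ring
      rw [h2j]
      calc d ^ (j + 1) * cnt (2 * j + 2) (playPrefix d σ τ (2 * j + 2))
          = d ^ j * (d * cnt (2 * j + 2) (playPrefix d σ τ (2 * j + 2))) := by ring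
        _ ≤ d ^ j * cnt (2 * j) (playPrefix d σ τ (2 * j)) := by
            exact Nat.mul_le_mul_left _ (le_trans step2 step1)
        _ ≤ S.card := ih (by omega)
  have hk2 : 2 * (k / 2) = k := by
    obtain ⟨m, hm⟩ := hkeven; omega
  have hfinal := key (k / 2) (by omega)
  rw [hk2] at hfinal
  have hzero : cnt k (playPrefix d σ τ k) = 0 := by
    by_contra h
    have h1 : 1 ≤ cnt k (playPrefix d σ τ k) := Nat.one_le_iff_ne_zero.mpr h
    have : d ^ (k / 2) ≤ S.card := le_trans (by nlinarith [Nat.one_le_iff_ne_zero.mpr h]) hfinal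
    omega
  intro hmem
  have : playPrefix d σ τ k ∈
      S.filter fun s => ∀ j : Fin k, ∀ h : (j : ℕ) < k, s ⟨j, h⟩ = playPrefix d σ τ k j := by
    simp [hmem]
  have : 0 < cnt k (playPrefix d σ τ k) := Finset.card_pos.mpr ⟨_, this⟩
  omega
end
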